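/- In the group G = ⟨z, y | z^{n+1}y^{n²} = 1, [y, z^k] = 1, (zy⁻¹)^k yⁿ z y⁻¹ = z^k⟩, the element z^k is central, and the quotient of G by the normal closures of z^k and yⁿ is the triangle group T_{j,n,k+1} = ⟨z, y | z^j = yⁿ = (zy⁻¹)^{k+1} = 1⟩, where j = gcd(n + 1, k). -/

import Mathlib

/-- `G = ⟨z, y | z^{n+1} y^{n²} = 1, [y, z^k] = 1, (zy⁻¹)^k yⁿ z y⁻¹ = z^k⟩`,
generators `z = of 0`, `y = of 1`. -/
def relsFam4 (n k : ℕ) : Set (FreeGroup (Fin 2)) :=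
  let z := FreeGroup.of (0 : Fin 2)
  let y := FreeGroup.of (1 : Fin 2)
  {z ^ (n + 1) * y ^ (n ^ 2),
   y * z ^ k * y⁻¹ * (z ^ k)⁻¹,
   (z * y⁻¹) ^ k * y ^ n * z * y⁻¹ * (z ^ k)⁻¹}

/-- The triangle group `T_{j,n,k+1} = ⟨z, y | z^j = yⁿ = (zy⁻¹)^{k+1} = 1⟩`. -/
def relsTjnk (j n k : ℕ) : Set (FreeGroup (Fin 2)) :=
  let z := FreeGroup.of (0 : Fin 2)
  let y := FreeGroup.of (1 : Fin 2)
  {z ^ j, y ^ n, (z * y⁻¹) ^ (k + 1)}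

/-!
`z^k` commutes with `y` by the second relation, hence with both generators, so it is central.
Modulo `z^k` and `yⁿ` (hence `y^{n²}`), the first relation becomes `z^{n+1} = 1`, which together
with `z^k = 1` says `z^j = 1`, and the third becomes `(zy⁻¹)^{k+1} = 1`. So the relators of `G`
together with `z^k, yⁿ` and those of `T_{j,n,k+1}` hold for the same pairs of elements of any
group, and hence have the same normal closure in the free group; by the third isomorphism
theorem, the quotient of `G` by `z^k, yⁿ` is the group presented by all these relators.
-/

namespace PresentedGroup

universe u

variable {α : Type u}

theorem lift_of_eq_mk (rels : Set (FreeGroup α)) (x : FreeGroup α) :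
    FreeGroup.lift (of (rels := rels)) x = mk rels x :=
  (FreeGroup.lift_unique (mk rels) fun _ => rfl).symm

theorem lift_of_eq_one_of_mem {rels : Set (FreeGroup α)} {r : FreeGroup α} (hr : r ∈ rels) :
    FreeGroup.lift (of (rels := rels)) r = 1 :=
  (lift_of_eq_mk rels r).trans (one_of_mem hr)

theorem mem_center_of_forall_commute {rels : Set (FreeGroup α)} {g : PresentedGroup rels}
    (h : ∀ a, Commute g (of a)) : g ∈ Subgroup.center (PresentedGroup rels) := by
  have hcentralizer : Subgroup.closure (Set.range (of (rels := rels))) ≤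
      Subgroup.centralizer {g} :=
    (Subgroup.closure_le _).mpr <| Set.range_subset_iff.mpr fun a _ hg => hg ▸ (h a).eq
  rw [closure_range_of] at hcentralizer
  exact Subgroup.mem_center_iff.mpr fun x => (hcentralizer trivial g rfl).symm

theorem normalClosure_eq_of_forall_lift_eq_one_iff {rels₁ rels₂ : Set (FreeGroup α)}
    (h : ∀ (H : Type u) [Group H] (f : α → H),
      (∀ r ∈ rels₁, FreeGroup.lift f r = 1) ↔ ∀ r ∈ rels₂, FreeGroup.lift f r = 1) :
    Subgroup.normalClosure rels₁ = Subgroup.normalClosure rels₂ := by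
  have hsubset : ∀ {s t : Set (FreeGroup α)},
      (∀ r ∈ t, FreeGroup.lift (of (rels := s)) r = 1) → t ⊆ Subgroup.normalClosure s :=
    fun hst r hr => mk_eq_one_iff.mp <| (lift_of_eq_mk _ r).symm.trans (hst r hr)
  exact le_antisymm
    (Subgroup.normalClosure_le_normal <| hsubset <|
      (h _ of).mpr fun _ => lift_of_eq_one_of_mem)
    (Subgroup.normalClosure_le_normal <| hsubset <|
      (h _ of).mp fun _ => lift_of_eq_one_of_mem)

theorem normalClosure_image_mk_eq_map (rels S : Set (FreeGroup α)) :
    Subgroup.normalClosure (mk rels '' S) =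
      (Subgroup.normalClosure (rels ∪ S)).map (mk rels) := by
  rw [Subgroup.map_normalClosure _ _ (mk_surjective rels), Set.image_union]
  refine le_antisymm (Subgroup.normalClosure_mono Set.subset_union_right) <|
    Subgroup.normalClosure_le_normal <| Set.union_subset ?_ Subgroup.subset_normalClosure
  rintro _ ⟨r, hr, rfl⟩
  exact (one_of_mem hr).symm ▸ one_mem _

def quotientNormalClosureEquiv (rels S : Set (FreeGroup α)) :
    PresentedGroup rels ⧸ Subgroup.normalClosure (mk rels '' S) ≃*
      PresentedGroup (rels ∪ S) :=
  have : ((Subgroup.normalClosure (rels ∪ S)).map (mk rels)).Normal :=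
    Subgroup.Normal.map inferInstance _ (mk_surjective rels)
  (QuotientGroup.quotientMulEquivOfEq (normalClosure_image_mk_eq_map rels S)).trans <|
    QuotientGroup.quotientQuotientEquivQuotient _ _ <|
      Subgroup.normalClosure_mono Set.subset_union_left

end PresentedGroup

open PresentedGroup

section Fam4

variable {H : Type*} [Group H] (n k : ℕ)

theorem forall_lift_relsFam4_eq_one_iff (f : Fin 2 → H) :
    (∀ r ∈ relsFam4 n k, FreeGroup.lift f r = 1) ↔
      f 0 ^ (n + 1) * f 1 ^ (n ^ 2) = 1 ∧ f 1 * f 0 ^ k * (f 1)⁻¹ * (f 0 ^ k)⁻¹ = 1 ∧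
        (f 0 * (f 1)⁻¹) ^ k * f 1 ^ n * f 0 * (f 1)⁻¹ * (f 0 ^ k)⁻¹ = 1 := by
  simp [relsFam4]

theorem forall_lift_relsTjnk_eq_one_iff (j : ℕ) (f : Fin 2 → H) :
    (∀ r ∈ relsTjnk j n k, FreeGroup.lift f r = 1) ↔
      f 0 ^ j = 1 ∧ f 1 ^ n = 1 ∧ (f 0 * (f 1)⁻¹) ^ (k + 1) = 1 := by
  simp [relsTjnk]

theorem relsFam4_iff_triangle_of_pow_eq_one {z y : H} (hzk : z ^ k = 1)
    (hyn : y ^ n = 1) :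
    (z ^ (n + 1) * y ^ (n ^ 2) = 1 ∧ y * z ^ k * y⁻¹ * (z ^ k)⁻¹ = 1 ∧
        (z * y⁻¹) ^ k * y ^ n * z * y⁻¹ * (z ^ k)⁻¹ = 1) ↔
      z ^ (n + 1).gcd k = 1 ∧ (z * y⁻¹) ^ (k + 1) = 1 := by
  have hyn2 : y ^ (n ^ 2) = 1 := by rw [sq, pow_mul, hyn, one_pow]
  rw [pow_gcd_eq_one, pow_succ _ k, ← mul_assoc]
  simp only [hzk, hyn, hyn2, mul_one, inv_one, mul_inv_cancel, and_true, true_and]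

theorem relsFam4_of_zero_pow_mem_center :
    (of 0 : PresentedGroup (relsFam4 n k)) ^ k ∈
      Subgroup.center (PresentedGroup (relsFam4 n k)) := by
  obtain ⟨-, hcomm, -⟩ :=
    (forall_lift_relsFam4_eq_one_iff n k of).mp fun _ => lift_of_eq_one_of_mem
  refine mem_center_of_forall_commute fun a => ?_
  fin_cases a
  · exact (Commute.refl _).pow_left k
  · exact Commute.symm (mul_inv_eq_iff_eq_mul.mp (mul_inv_eq_one.mp hcomm))

theorem forall_lift_relsFam4_union_eq_one_iff (f : Fin 2 → H) :
    (∀ r ∈ relsFam4 n k ∪ {FreeGroup.of 0 ^ k, FreeGroup.of 1 ^ n},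
        FreeGroup.lift f r = 1) ↔
      ∀ r ∈ relsTjnk ((n + 1).gcd k) n k, FreeGroup.lift f r = 1 := by
  simp only [Set.mem_union, or_imp, forall_and, forall_lift_relsFam4_eq_one_iff,
    forall_lift_relsTjnk_eq_one_iff, Set.forall_mem_insert, forall_eq, Set.mem_singleton_iff,
    map_pow, FreeGroup.lift_apply_of]
  constructor
  · rintro ⟨hfam, hzk, hyn⟩
    obtain ⟨hgcd, hcox⟩ := (relsFam4_iff_triangle_of_pow_eq_one n k hzk hyn).mp hfam
    exact ⟨hgcd, hyn, hcox⟩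
  · rintro ⟨hgcd, hyn, hcox⟩
    have hzk := (pow_gcd_eq_one.mp hgcd).2
    exact ⟨(relsFam4_iff_triangle_of_pow_eq_one n k hzk hyn).mpr ⟨hgcd, hcox⟩, hzk, hyn⟩

end Fam4

/-- In `G_{(4)}`, the element `z^k` is central, and the quotient by the normal
closure of `{z^k, yⁿ}` is the triangle group `T_{j,n,k+1}` with `j = gcd(n+1, k)`. -/
theorem stmt_16 (n k : ℕ) (j : ℕ) (hj : j = Nat.gcd (n + 1) k) :
    ((PresentedGroup.of 0 : PresentedGroup (relsFam4 n k)) ^ k ∈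
      Subgroup.center (PresentedGroup (relsFam4 n k))) ∧
    Nonempty
      ((PresentedGroup (relsFam4 n k) ⧸
          Subgroup.normalClosure
            ({(PresentedGroup.of 0 : PresentedGroup (relsFam4 n k)) ^ k,
              (PresentedGroup.of 1 : PresentedGroup (relsFam4 n k)) ^ n} :
              Set (PresentedGroup (relsFam4 n k)))) ≃*
        PresentedGroup (relsTjnk j n k)) := by
  subst hj
  refine ⟨relsFam4_of_zero_pow_mem_center n k, ?_⟩
  have hquot : ({of 0 ^ k, of 1 ^ n} : Set (PresentedGroup (relsFam4 n k))) =
      mk _ '' {FreeGroup.of 0 ^ k, FreeGroup.of 1 ^ n} := by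
    simp only [Set.image_insert_eq, Set.image_singleton, map_pow]
    rfl
  rw [hquot]
  exact ⟨(quotientNormalClosureEquiv _ _).trans <| QuotientGroup.quotientMulEquivOfEq <|
    normalClosure_eq_of_forall_lift_eq_one_iff fun _ _ =>
      forall_lift_relsFam4_union_eq_one_iff n k⟩
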